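/- 3R_{2,4} + 2R_{3,3} = 112ζ(3)² − π⁶/6, where R_{p,q} = ∑_{n≥1} H_{n-1}^{(p)}/(n−1/2)^q with H_n^{(r)} = ∑_{k=1}^n 1/k^r. -/

import Mathlib

/-- odd harmonic numbers of order r: h_n^{(r)} = ∑_{k=1}^n 1/(k-1/2)^r -/
noncomputable def oddH (r n : ℕ) : ℝ := ∑ k ∈ Finset.range n, (((k : ℝ) + 1/2) ^ r)⁻¹

/-- generalized harmonic numbers of order r: H_n^{(r)} = ∑_{k=1}^n 1/k^r -/
noncomputable def genH (r n : ℕ) : ℝ := ∑ k ∈ Finset.range n, (((k : ℝ) + 1) ^ r)⁻¹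

/-- T_{p,q} = ∑_{n≥1} h_{n-1}^{(p)}/(n-1/2)^q -/
noncomputable def Tsum (p q : ℕ) : ℝ := ∑' n : ℕ, oddH p n / ((n : ℝ) + 1/2) ^ q

/-- S̃_{p,q} = ∑_{n≥1} h_n^{(p)}/n^q -/
noncomputable def Ssum (p q : ℕ) : ℝ := ∑' n : ℕ, oddH p (n + 1) / ((n : ℝ) + 1) ^ q

/-- R_{p,q} = ∑_{n≥1} H_{n-1}^{(p)}/(n-1/2)^q -/
noncomputable def Rsum (p q : ℕ) : ℝ := ∑' n : ℕ, genH p n / ((n : ℝ) + 1/2) ^ q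

/-- t̃(s) = ∑_{n≥1} 1/(n-1/2)^s -/
noncomputable def ttv (s : ℕ) : ℝ := ∑' n : ℕ, (((n : ℝ) + 1/2) ^ s)⁻¹

/-- ζ(s) = ∑_{n≥1} 1/n^s (for integer s ≥ 2) -/
noncomputable def zv (s : ℕ) : ℝ := ∑' n : ℕ, (((n : ℝ) + 1) ^ s)⁻¹

/-!
Write `t(s) = ∑ₙ (n + 1/2)⁻ˢ`. The Cauchy product `ζ(p) t(q) = ∑ₙ ∑_{k+m=n} (k+1)⁻ᵖ (m+1/2)⁻ᵠ` is
summed along antidiagonals, on which `(k+1) + (m+1/2) = n + 3/2` is constant, so a partial fraction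
decomposition in `a = k+1`, `b = m+1/2` turns `3 ζ(2) t(4) - 2 ζ(3) t(3)` into a combination of
`R`- and `T`-sums. The `T`-sums are eliminated by the reflection
`T_{p,q} + T_{q,p} = t(p) t(q) - t(p+q)`, and `t(s) = (2ˢ - 1) ζ(s)` together with Euler's values of
`ζ(2)`, `ζ(4)`, `ζ(6)` finishes the computation.
-/

open Finset Real

lemma summable_inv_nat_add_pow {c : ℝ} (hc : 0 ≤ c) {p : ℕ} (hp : 2 ≤ p) :
    Summable fun k : ℕ => (((k : ℝ) + c) ^ p)⁻¹ := by
  have h := (Real.summable_one_div_nat_add_rpow c p).2 (by exact_mod_cast hp)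
  refine h.congr fun k => ?_
  rw [abs_of_nonneg (by positivity), Real.rpow_natCast, one_div]

section LowerTriangle

variable {u v : ℕ → ℝ}

lemma summable_sum_range_mul (hu0 : ∀ k, 0 ≤ u k) (hv0 : ∀ n, 0 ≤ v n) (hu : Summable u)
    (hv : Summable v) : Summable fun n => (∑ k ∈ range n, u k) * v n :=
  (hv.mul_left (∑' k, u k)).of_nonneg_of_le
    (fun n => mul_nonneg (sum_nonneg fun k _ => hu0 k) (hv0 n))
    fun n => mul_le_mul_of_nonneg_right (hu.sum_le_tsum _ fun k _ => hu0 k) (hv0 n)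

lemma sum_range_mul_sum_range (N : ℕ) :
    (∑ k ∈ range N, u k) * (∑ k ∈ range N, v k) =
      ∑ n ∈ range N, ((∑ k ∈ range n, u k) * v n + (∑ k ∈ range n, v k) * u n + u n * v n) := by
  induction N with
  | zero => simp
  | succ N ih => rw [sum_range_succ, sum_range_succ, sum_range_succ, ← ih]; ring

lemma tsum_sum_range_mul_add_tsum_sum_range_mul (hu0 : ∀ k, 0 ≤ u k) (hv0 : ∀ n, 0 ≤ v n)
    (hu : Summable u) (hv : Summable v) :
    ∑' n, (∑ k ∈ range n, u k) * v n + ∑' n, (∑ k ∈ range n, v k) * u n =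
      (∑' k, u k) * (∑' k, v k) - ∑' n, u n * v n := by
  have hU : ∀ n, 0 ≤ ∑ k ∈ range n, u k := fun n => sum_nonneg fun k _ => hu0 k
  have hV : ∀ n, 0 ≤ ∑ k ∈ range n, v k := fun n => sum_nonneg fun k _ => hv0 k
  have hprod : HasSum (fun n => (∑ k ∈ range n, u k) * v n + (∑ k ∈ range n, v k) * u n
      + u n * v n) ((∑' k, u k) * (∑' k, v k)) := by
    rw [hasSum_iff_tendsto_nat_of_nonneg fun n =>
      add_nonneg (add_nonneg (mul_nonneg (hU n) (hv0 n)) (mul_nonneg (hV n) (hu0 n)))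
        (mul_nonneg (hu0 n) (hv0 n))]
    simp_rw [← sum_range_mul_sum_range]
    exact hu.hasSum.tendsto_sum_nat.mul hv.hasSum.tendsto_sum_nat
  have hdiag : Summable fun n => u n * v n :=
    (hv.mul_left (∑' k, u k)).of_nonneg_of_le (fun n => mul_nonneg (hu0 n) (hv0 n))
      fun n => mul_le_mul_of_nonneg_right (hu.le_tsum n fun k _ => hu0 k) (hv0 n)
  have hsplit := ((summable_sum_range_mul hu0 hv0 hu hv).hasSum.add
    (summable_sum_range_mul hv0 hu0 hv hu).hasSum).add hdiag.hasSum
  linarith [hsplit.unique hprod]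

lemma hasSum_sum_range_succ_mul (h : Summable fun n => (∑ k ∈ range n, u k) * v n) :
    HasSum (fun N => (∑ k ∈ range (N + 1), u k) * v (N + 1))
      (∑' n, (∑ k ∈ range n, u k) * v n) := by
  simpa using (hasSum_nat_add_iff' 1).2 h.hasSum

end LowerTriangle

lemma hasSum_sum_antidiagonal_mul {x y : ℕ → ℝ} (hx0 : ∀ k, 0 ≤ x k) (hy0 : ∀ k, 0 ≤ y k)
    (hx : Summable x) (hy : Summable y) :
    HasSum (fun N => ∑ p ∈ antidiagonal N, x p.1 * y p.2) ((∑' k, x k) * ∑' k, y k) := by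
  have hxy := hx.mul_of_nonneg hy hx0 hy0
  rw [hx.tsum_mul_tsum_eq_tsum_sum_antidiagonal hy hxy]
  exact (summable_sum_mul_antidiagonal_of_summable_mul hxy).hasSum

lemma hasSum_zv_mul_ttv {p q : ℕ} (hp : 2 ≤ p) (hq : 2 ≤ q) :
    HasSum (fun N : ℕ => ∑ x ∈ antidiagonal N,
      (((x.1 : ℝ) + 1) ^ p)⁻¹ * (((x.2 : ℝ) + 1 / 2) ^ q)⁻¹) (zv p * ttv q) :=
  hasSum_sum_antidiagonal_mul (x := fun k : ℕ => (((k : ℝ) + 1) ^ p)⁻¹)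
    (y := fun k : ℕ => (((k : ℝ) + 1 / 2) ^ q)⁻¹) (fun _ => by positivity) (fun _ => by positivity)
    (summable_inv_nat_add_pow zero_le_one hp) (summable_inv_nat_add_pow one_half_pos.le hq)

lemma Rsum_eq_tsum_sum_range_mul (p q : ℕ) :
    Rsum p q = ∑' n, (∑ k ∈ range n, (((k : ℝ) + 1) ^ p)⁻¹) * (((n : ℝ) + 1 / 2) ^ q)⁻¹ :=
  tsum_congr fun _ => div_eq_mul_inv _ _

lemma Tsum_eq_tsum_sum_range_mul (p q : ℕ) :
    Tsum p q = ∑' n, (∑ k ∈ range n, (((k : ℝ) + 1 / 2) ^ p)⁻¹) * (((n : ℝ) + 1 / 2) ^ q)⁻¹ :=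
  tsum_congr fun _ => div_eq_mul_inv _ _

lemma hasSum_Rsum {p q : ℕ} (hp : 2 ≤ p) (hq : 2 ≤ q) :
    HasSum (fun N : ℕ => genH p (N + 1) * ((((N + 1 : ℕ) : ℝ) + 1 / 2) ^ q)⁻¹) (Rsum p q) := by
  rw [Rsum_eq_tsum_sum_range_mul]
  exact hasSum_sum_range_succ_mul <| summable_sum_range_mul (fun _ => by positivity)
    (fun _ => by positivity) (summable_inv_nat_add_pow zero_le_one hp)
    (summable_inv_nat_add_pow one_half_pos.le hq)

lemma hasSum_Tsum {p q : ℕ} (hp : 2 ≤ p) (hq : 2 ≤ q) :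
    HasSum (fun N : ℕ => oddH p (N + 1) * ((((N + 1 : ℕ) : ℝ) + 1 / 2) ^ q)⁻¹) (Tsum p q) := by
  rw [Tsum_eq_tsum_sum_range_mul]
  exact hasSum_sum_range_succ_mul <| summable_sum_range_mul (fun _ => by positivity)
    (fun _ => by positivity) (summable_inv_nat_add_pow one_half_pos.le hp)
    (summable_inv_nat_add_pow one_half_pos.le hq)

lemma Tsum_add_Tsum {p q : ℕ} (hp : 2 ≤ p) (hq : 2 ≤ q) :
    Tsum p q + Tsum q p = ttv p * ttv q - ttv (p + q) := by
  rw [Tsum_eq_tsum_sum_range_mul, Tsum_eq_tsum_sum_range_mul,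
    tsum_sum_range_mul_add_tsum_sum_range_mul (fun _ => by positivity) (fun _ => by positivity)
      (summable_inv_nat_add_pow one_half_pos.le hp) (summable_inv_nat_add_pow one_half_pos.le hq)]
  congr 1
  exact tsum_congr fun n => by rw [← mul_inv, ← pow_add]

-- In `3 • (decomposition of a⁻² b⁻⁴) - 2 • (decomposition of a⁻³ b⁻³)` the terms
-- `a⁻¹ (a+b)⁻⁵` and `b⁻¹ (a+b)⁻⁵` cancel.
lemma partial_fractions {a b : ℝ} (ha : a ≠ 0) (hb : b ≠ 0) (hab : a + b ≠ 0) :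
    3 * ((a ^ 2)⁻¹ * (b ^ 4)⁻¹) - 2 * ((a ^ 3)⁻¹ * (b ^ 3)⁻¹) =
      3 * ((b ^ 2)⁻¹ * ((a + b) ^ 4)⁻¹) + 4 * ((b ^ 3)⁻¹ * ((a + b) ^ 3)⁻¹)
        + 3 * ((b ^ 4)⁻¹ * ((a + b) ^ 2)⁻¹) - 3 * ((a ^ 2)⁻¹ * ((a + b) ^ 4)⁻¹)
        - 2 * ((a ^ 3)⁻¹ * ((a + b) ^ 3)⁻¹) := by
  field_simp
  ring

lemma sum_antidiagonal_partial_fractions (N : ℕ) :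
    3 * ∑ x ∈ antidiagonal N, (((x.1 : ℝ) + 1) ^ 2)⁻¹ * (((x.2 : ℝ) + 1 / 2) ^ 4)⁻¹
      - 2 * ∑ x ∈ antidiagonal N, (((x.1 : ℝ) + 1) ^ 3)⁻¹ * (((x.2 : ℝ) + 1 / 2) ^ 3)⁻¹ =
    3 * (oddH 2 (N + 1) * ((((N + 1 : ℕ) : ℝ) + 1 / 2) ^ 4)⁻¹)
      + 4 * (oddH 3 (N + 1) * ((((N + 1 : ℕ) : ℝ) + 1 / 2) ^ 3)⁻¹)
      + 3 * (oddH 4 (N + 1) * ((((N + 1 : ℕ) : ℝ) + 1 / 2) ^ 2)⁻¹)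
      - 3 * (genH 2 (N + 1) * ((((N + 1 : ℕ) : ℝ) + 1 / 2) ^ 4)⁻¹)
      - 2 * (genH 3 (N + 1) * ((((N + 1 : ℕ) : ℝ) + 1 / 2) ^ 3)⁻¹) := by
  have hgenH (r : ℕ) : genH r (N + 1) = ∑ x ∈ antidiagonal N, (((x.1 : ℝ) + 1) ^ r)⁻¹ := by
    rw [Nat.sum_antidiagonal_eq_sum_range_succ_mk]; rfl
  have hoddH (r : ℕ) : oddH r (N + 1) = ∑ x ∈ antidiagonal N, (((x.2 : ℝ) + 1 / 2) ^ r)⁻¹ := by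
    rw [← Nat.sum_antidiagonal_swap, Nat.sum_antidiagonal_eq_sum_range_succ_mk]; rfl
  simp only [hgenH, hoddH, sum_mul, mul_sum, ← sum_sub_distrib, ← sum_add_distrib]
  refine sum_congr rfl fun x hx => ?_
  have hN : (((N + 1 : ℕ) : ℝ) + 1 / 2) = ((x.1 : ℝ) + 1) + ((x.2 : ℝ) + 1 / 2) := by
    rw [← mem_antidiagonal.1 hx]; push_cast; ring
  rw [hN]
  exact partial_fractions (by positivity) (by positivity) (by positivity)

lemma three_Rsum_two_four_add_two_Rsum_three_three :
    3 * Rsum 2 4 + 2 * Rsum 3 3 =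
      3 * (Tsum 2 4 + Tsum 4 2) + 2 * (2 * Tsum 3 3) - 3 * (zv 2 * ttv 4) + 2 * (zv 3 * ttv 3) := by
  have hleft := ((hasSum_zv_mul_ttv le_rfl (by norm_num : 2 ≤ 4)).mul_left 3).sub
    ((hasSum_zv_mul_ttv (by norm_num : 2 ≤ 3) (by norm_num : 2 ≤ 3)).mul_left 2)
  simp_rw [sum_antidiagonal_partial_fractions] at hleft
  have hright := (((((hasSum_Tsum le_rfl (by norm_num : 2 ≤ 4)).mul_left 3).add
    ((hasSum_Tsum (by norm_num : 2 ≤ 3) (by norm_num : 2 ≤ 3)).mul_left 4)).add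
    ((hasSum_Tsum (by norm_num : 2 ≤ 4) le_rfl).mul_left 3)).sub
    ((hasSum_Rsum le_rfl (by norm_num : 2 ≤ 4)).mul_left 3)).sub
    ((hasSum_Rsum (by norm_num : 2 ≤ 3) (by norm_num : 2 ≤ 3)).mul_left 2)
  linarith [hleft.unique hright]

lemma bernoulli'_six : bernoulli' 6 = 1 / 42 := by
  have h5 : bernoulli' 5 = 0 := bernoulli'_eq_zero_of_odd (by decide) (by norm_num)
  rw [bernoulli'_def]
  norm_num [sum_range_succ, Nat.choose, h5]

lemma hasSum_zeta_six : HasSum (fun n : ℕ => (1 : ℝ) / (n : ℝ) ^ 6) (π ^ 6 / 945) := by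
  convert hasSum_zeta_nat (k := 3) (by norm_num) using 1
  rw [bernoulli_eq_bernoulli'_of_ne_one (by norm_num), bernoulli'_six]
  norm_num [Nat.factorial]
  ring

lemma zv_eq_of_hasSum {s : ℕ} (hs : s ≠ 0) {v : ℝ} (h : HasSum (fun n : ℕ => 1 / (n : ℝ) ^ s) v) :
    zv s = v := by
  rw [← hasSum_nat_add_iff' 1] at h
  simpa [zv, hs] using h.tsum_eq

lemma ttv_eq_mul_zv {s : ℕ} (hs : 2 ≤ s) : ttv s = (2 ^ s - 1) * zv s := by
  have heven : ∀ k : ℕ, ((((2 * k : ℕ) : ℝ) + 1) ^ s)⁻¹ = (2 ^ s)⁻¹ * (((k : ℝ) + 1 / 2) ^ s)⁻¹ :=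
    fun k => by push_cast; rw [← mul_inv, ← mul_pow]; ring_nf
  have hodd : ∀ k : ℕ, ((((2 * k + 1 : ℕ) : ℝ) + 1) ^ s)⁻¹ = (2 ^ s)⁻¹ * (((k : ℝ) + 1) ^ s)⁻¹ :=
    fun k => by push_cast; rw [← mul_inv, ← mul_pow]; ring_nf
  have key := tsum_even_add_odd (f := fun n : ℕ => (((n : ℝ) + 1) ^ s)⁻¹)
    (((summable_inv_nat_add_pow one_half_pos.le hs).mul_left _).congr fun k => (heven k).symm)
    (((summable_inv_nat_add_pow zero_le_one hs).mul_left _).congr fun k => (hodd k).symm)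
  rw [tsum_congr heven, tsum_congr hodd, tsum_mul_left, tsum_mul_left] at key
  change (2 ^ s)⁻¹ * ttv s + (2 ^ s)⁻¹ * zv s = zv s at key
  field_simp at key
  linarith

theorem stmt10 : 3 * Rsum 2 4 + 2 * Rsum 3 3 = 112 * zv 3 ^ 2 - Real.pi ^ 6 / 6 := by
  have hζ2 : zv 2 = π ^ 2 / 6 := zv_eq_of_hasSum two_ne_zero hasSum_zeta_two
  have hζ4 : zv 4 = π ^ 4 / 90 := zv_eq_of_hasSum four_ne_zero hasSum_zeta_four
  have hζ6 : zv 6 = π ^ 6 / 945 := zv_eq_of_hasSum (by norm_num) hasSum_zeta_six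
  rw [three_Rsum_two_four_add_two_Rsum_three_three,
    Tsum_add_Tsum (p := 2) (q := 4) (by norm_num) (by norm_num), two_mul (Tsum 3 3),
    Tsum_add_Tsum (p := 3) (q := 3) (by norm_num) (by norm_num)]
  simp only [ttv_eq_mul_zv (le_refl 2), ttv_eq_mul_zv (by norm_num : 2 ≤ 3),
    ttv_eq_mul_zv (by norm_num : 2 ≤ 4), ttv_eq_mul_zv (by norm_num : 2 ≤ 6),
    show 2 + 4 = 6 from rfl, hζ2, hζ4, hζ6]
  ring
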